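/- arXiv:0907.2394 — 4 statements merged into one kernel-verified Lean document; each statement's English description precedes it below -/
import Mathlib

section
/- For all κ₁, κ₂, α, β, θ ∈ ℝ, the matrix exponentials of the generators H = [[0, −κ₁, 0], [1, 0, 0], [0, 0, 0]], P = [[0, 0, −κ₁κ₂], [0, 0, 0], [1, 0, 0]], K = [[0, 0, 0], [0, 0, −κ₂], [0, 1, 0]] are given by exp(αH) = [[C_{κ₁}(α), −κ₁S_{κ₁}(α), 0], [S_{κ₁}(α), C_{κ₁}(α), 0], [0, 0, 1]], exp(βP) = [[C_{κ₁κ₂}(β), 0, −κ₁κ₂S_{κ₁κ₂}(β)], [0, 1, 0], [S_{κ₁κ₂}(β), 0, C_{κ₁κ₂}(β)]], and exp(θK) = [[1, 0, 0], [0, C_{κ₂}(θ), −κ₂S_{κ₂}(θ)], [0, S_{κ₂}(θ), C_{κ₂}(θ)]]. -/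
/-! Each generator `A` satisfies `A * A = -κ • D` and `D * A = A`, where `D` is the projection onto
the coordinate plane on which `A` acts. Hence `A ^ (2k+1) = (-κ)^k • A` and
`A ^ (2k+2) = (-κ)^(k+1) • D`, so the exponential series of `t • A` splits into the Taylor series
`S_κ(t) = ∑ (-κ)^k t^(2k+1)/(2k+1)!` and `C_κ(t) = ∑ (-κ)^k t^(2k)/(2k)!`, giving
`exp (t • A) = 1 + S_κ(t) • A + (C_κ(t) - 1) • D`. -/

open NormedSpace

/-- The generalized cosine `C_κ`. -/
noncomputable def Ck (κ φ : ℝ) : ℝ :=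
  if 0 < κ then Real.cos (Real.sqrt κ * φ)
  else if κ = 0 then 1
  else Real.cosh (Real.sqrt (-κ) * φ)

/-- The generalized sine `S_κ`. -/
noncomputable def Sk (κ φ : ℝ) : ℝ :=
  if 0 < κ then Real.sin (Real.sqrt κ * φ) / Real.sqrt κ
  else if κ = 0 then φ
  else Real.sinh (Real.sqrt (-κ) * φ) / Real.sqrt (-κ)

open scoped Nat

theorem hasSum_Ck (κ t : ℝ) :
    HasSum (fun k : ℕ => (-κ) ^ k * t ^ (2 * k) / (2 * k)!) (Ck κ t) := by
  rcases lt_trichotomy κ 0 with hκ | rfl | hκ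
  · have hs : Real.sqrt (-κ) ^ 2 = -κ := Real.sq_sqrt (by linarith)
    rw [Ck, if_neg hκ.not_gt, if_neg hκ.ne]
    convert Real.hasSum_cosh (Real.sqrt (-κ) * t) using 2 with k
    rw [mul_pow, pow_mul, pow_mul, hs]
  · simpa [Ck] using hasSum_single (f := fun k : ℕ => (-0 : ℝ) ^ k * t ^ (2 * k) / (2 * k)!) 0
      fun k hk => by simp [hk]
  · have hs : Real.sqrt κ ^ 2 = κ := Real.sq_sqrt hκ.le
    rw [Ck, if_pos hκ]
    convert Real.hasSum_cos (Real.sqrt κ * t) using 2 with k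
    rw [mul_pow, pow_mul, pow_mul, hs, neg_pow, mul_assoc]

theorem hasSum_Sk (κ t : ℝ) :
    HasSum (fun k : ℕ => (-κ) ^ k * t ^ (2 * k + 1) / (2 * k + 1)!) (Sk κ t) := by
  rcases lt_trichotomy κ 0 with hκ | rfl | hκ
  · have hs : Real.sqrt (-κ) ^ 2 = -κ := Real.sq_sqrt (by linarith)
    have hs0 : Real.sqrt (-κ) ≠ 0 := (Real.sqrt_pos.2 (by linarith)).ne'
    have hterm (k : ℕ) : (-κ) ^ k * t ^ (2 * k + 1) / (2 * k + 1)! =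
        (Real.sqrt (-κ) * t) ^ (2 * k + 1) / (2 * k + 1)! / Real.sqrt (-κ) := by
      rw [pow_succ, pow_succ, mul_pow, pow_mul, pow_mul, hs]
      field_simp
    rw [Sk, if_neg hκ.not_gt, if_neg hκ.ne]
    simpa only [hterm] using (Real.hasSum_sinh (Real.sqrt (-κ) * t)).div_const (Real.sqrt (-κ))
  · simpa [Sk] using
      hasSum_single (f := fun k : ℕ => (-0 : ℝ) ^ k * t ^ (2 * k + 1) / (2 * k + 1)!) 0
        fun k hk => by simp [hk]
  · have hs : Real.sqrt κ ^ 2 = κ := Real.sq_sqrt hκ.le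
    have hs0 : Real.sqrt κ ≠ 0 := (Real.sqrt_pos.2 hκ).ne'
    have hterm (k : ℕ) : (-κ) ^ k * t ^ (2 * k + 1) / (2 * k + 1)! =
        (-1) ^ k * (Real.sqrt κ * t) ^ (2 * k + 1) / (2 * k + 1)! / Real.sqrt κ := by
      rw [pow_succ, pow_succ, mul_pow, pow_mul, pow_mul, hs, neg_pow]
      field_simp
    rw [Sk, if_pos hκ]
    simpa only [hterm] using (Real.hasSum_sin (Real.sqrt κ * t)).div_const (Real.sqrt κ)

section
variable {𝔸 : Type*} [Ring 𝔸] [Algebra ℝ 𝔸] {A D : 𝔸} {κ : ℝ}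

theorem pow_two_mul_add_one_of_mul_self_eq (hAA : A * A = (-κ) • D) (hDA : D * A = A)
    (k : ℕ) : A ^ (2 * k + 1) = (-κ) ^ k • A := by
  induction k with
  | zero => simp
  | succ k ih =>
    rw [show 2 * (k + 1) + 1 = 2 + (2 * k + 1) by ring, pow_add, sq, hAA, ih, smul_mul_smul,
      hDA, pow_succ']

theorem pow_two_mul_add_two_of_mul_self_eq (hAA : A * A = (-κ) • D) (hDA : D * A = A)
    (k : ℕ) : A ^ (2 * k + 2) = (-κ) ^ (k + 1) • D := by
  rw [pow_succ, pow_two_mul_add_one_of_mul_self_eq hAA hDA, smul_mul_assoc, hAA, smul_smul,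
    pow_succ]

variable [TopologicalSpace 𝔸] [IsTopologicalRing 𝔸] [ContinuousSMul ℝ 𝔸] [T2Space 𝔸]

theorem exp_smul_eq_of_mul_self_eq (hAA : A * A = (-κ) • D) (hDA : D * A = A) (t : ℝ) :
    exp (t • A) = 1 + Sk κ t • A + (Ck κ t - 1) • D := by
  let f : ℕ → 𝔸 := fun n => ((n ! : ℝ)⁻¹) • (t • A) ^ n
  have hf (n : ℕ) : f n = (t ^ n / n !) • A ^ n := by
    simp only [f, smul_pow, smul_smul, div_eq_inv_mul]
  have hodd : HasSum (fun k => f (2 * k + 1)) (Sk κ t • A) := by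
    convert (hasSum_Sk κ t).smul_const A using 2 with k
    rw [hf, pow_two_mul_add_one_of_mul_self_eq hAA hDA, smul_smul]
    ring_nf
  have heven : HasSum (fun k => f (2 * k)) (1 + (Ck κ t - 1) • D) := by
    have hCk := (hasSum_nat_add_iff' 1).2 (hasSum_Ck κ t)
    simp only [Finset.sum_range_one] at hCk
    have htail : HasSum (fun k => f (2 * (k + 1))) ((Ck κ t - 1) • D) := by
      convert hCk.smul_const D using 2 with k
      · rw [hf, mul_add, pow_two_mul_add_two_of_mul_self_eq hAA hDA, smul_smul]
        ring_nf
      · simp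
    convert HasSum.zero_add (f := fun k => f (2 * k)) htail using 2
    simp [f]
  have hexp : exp (t • A) = ∑' n, f n := by rw [exp_eq_tsum ℝ]
  rw [hexp, (heven.even_add_odd hodd).tsum_eq]
  abel
end

/-- The matrix exponentials of the kinematical generators `H`, `P`, `K` are the one-parameter
subgroups expressed via the generalized trigonometric functions. -/
theorem exp_of_generators (κ₁ κ₂ α β θ : ℝ) :
    let H : Matrix (Fin 3) (Fin 3) ℝ := !![0, -κ₁, 0; 1, 0, 0; 0, 0, 0]
    let P : Matrix (Fin 3) (Fin 3) ℝ := !![0, 0, -κ₁ * κ₂; 0, 0, 0; 1, 0, 0]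
    let K : Matrix (Fin 3) (Fin 3) ℝ := !![0, 0, 0; 0, 0, -κ₂; 0, 1, 0]
    exp (α • H) = !![Ck κ₁ α, -κ₁ * Sk κ₁ α, 0; Sk κ₁ α, Ck κ₁ α, 0; 0, 0, 1] ∧
    exp (β • P) = !![Ck (κ₁ * κ₂) β, 0, -(κ₁ * κ₂) * Sk (κ₁ * κ₂) β; 0, 1, 0;
      Sk (κ₁ * κ₂) β, 0, Ck (κ₁ * κ₂) β] ∧
    exp (θ • K) = !![1, 0, 0; 0, Ck κ₂ θ, -κ₂ * Sk κ₂ θ; 0, Sk κ₂ θ, Ck κ₂ θ] := by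
  intro H P K
  refine ⟨(exp_smul_eq_of_mul_self_eq (κ := κ₁)
      (D := !![1, 0, 0; 0, 1, 0; 0, 0, 0]) ?_ ?_ α).trans ?_,
    (exp_smul_eq_of_mul_self_eq (κ := κ₁ * κ₂)
      (D := !![1, 0, 0; 0, 0, 0; 0, 0, 1]) ?_ ?_ β).trans ?_,
    (exp_smul_eq_of_mul_self_eq (κ := κ₂)
      (D := !![0, 0, 0; 0, 1, 0; 0, 0, 1]) ?_ ?_ θ).trans ?_⟩
  all_goals
    ext i j
    fin_cases i <;> fin_cases j <;> simp [H, P, K, Matrix.mul_apply, Fin.sum_univ_three] <;> ring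
end

section
/- Let κ₁, κ₂ ∈ ℝ and let G = diag(1, κ₁, κ₁κ₂) be the 3×3 diagonal matrix of the metric ds² = dy² + κ₁dt² + κ₁κ₂dx². Then for every α, β, θ ∈ ℝ, each of the matrices M₁ = [[C_{κ₁}(α), −κ₁S_{κ₁}(α), 0], [S_{κ₁}(α), C_{κ₁}(α), 0], [0, 0, 1]], M₂ = [[C_{κ₁κ₂}(β), 0, −κ₁κ₂S_{κ₁κ₂}(β)], [0, 1, 0], [S_{κ₁κ₂}(β), 0, C_{κ₁κ₂}(β)]], and M₃ = [[1, 0, 0], [0, C_{κ₂}(θ), −κ₂S_{κ₂}(θ)], [0, S_{κ₂}(θ), C_{κ₂}(θ)]] satisfies Mᵀ·G·M = G, i.e. the one-parameter subgroups generated by H, P, K act by isometries of the (possibly indefinite or degenerate) metric G. -/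
open Matrix

theorem Ck_sq_add_mul_Sk_sq (κ φ : ℝ) : Ck κ φ ^ 2 + κ * Sk κ φ ^ 2 = 1 := by
  rcases lt_trichotomy κ 0 with hκ | rfl | hκ
  · have hsqrt : Real.sqrt (-κ) ^ 2 = -κ := Real.sq_sqrt (neg_nonneg.2 hκ.le)
    simp only [Ck, Sk, if_neg hκ.not_gt, if_neg hκ.ne, div_pow, hsqrt]
    rw [mul_div_assoc', div_neg, mul_div_cancel_left₀ _ hκ.ne, ← sub_eq_add_neg]
    exact Real.cosh_sq_sub_sinh_sq _
  · simp [Ck, Sk]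
  · have hsqrt : Real.sqrt κ ^ 2 = κ := Real.sq_sqrt hκ.le
    simp only [Ck, Sk, if_pos hκ, div_pow, hsqrt]
    rw [mul_div_cancel₀ _ hκ.ne']
    exact Real.cos_sq_add_sin_sq _

section

variable {R : Type*} [CommRing R]

theorem transpose_mul_diagonal_mul_rotation₀₁ {a b κ c s : R} (h : c ^ 2 + κ * s ^ 2 = 1) :
    (!![c, -κ * s, 0; s, c, 0; 0, 0, 1])ᵀ * diagonal ![a, a * κ, b] *
      !![c, -κ * s, 0; s, c, 0; 0, 0, 1] = diagonal ![a, a * κ, b] := by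
  ext i j
  fin_cases i <;> fin_cases j <;> simp [mul_apply, Fin.sum_univ_three] <;>
    first | ring1 | linear_combination a * h | linear_combination a * κ * h

theorem transpose_mul_diagonal_mul_rotation₀₂ {a b κ c s : R} (h : c ^ 2 + κ * s ^ 2 = 1) :
    (!![c, 0, -κ * s; 0, 1, 0; s, 0, c])ᵀ * diagonal ![a, b, a * κ] *
      !![c, 0, -κ * s; 0, 1, 0; s, 0, c] = diagonal ![a, b, a * κ] := by
  ext i j
  fin_cases i <;> fin_cases j <;> simp [mul_apply, Fin.sum_univ_three] <;>
    first | ring1 | linear_combination a * h | linear_combination a * κ * h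

theorem transpose_mul_diagonal_mul_rotation₁₂ {a b κ c s : R} (h : c ^ 2 + κ * s ^ 2 = 1) :
    (!![1, 0, 0; 0, c, -κ * s; 0, s, c])ᵀ * diagonal ![b, a, a * κ] *
      !![1, 0, 0; 0, c, -κ * s; 0, s, c] = diagonal ![b, a, a * κ] := by
  ext i j
  fin_cases i <;> fin_cases j <;> simp [mul_apply, Fin.sum_univ_three] <;>
    first | ring1 | linear_combination a * h | linear_combination a * κ * h

end

/-- The one-parameter subgroups generated by `H`, `P`, `K` act by isometries of the
(possibly indefinite or degenerate) metric `G = diag(1, κ₁, κ₁κ₂)`: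
`Mᵀ G M = G` for each of the three families of matrices. -/
theorem one_parameter_subgroups_are_isometries (κ₁ κ₂ α β θ : ℝ) :
    let G : Matrix (Fin 3) (Fin 3) ℝ := Matrix.diagonal ![1, κ₁, κ₁ * κ₂]
    let M₁ : Matrix (Fin 3) (Fin 3) ℝ :=
      !![Ck κ₁ α, -κ₁ * Sk κ₁ α, 0; Sk κ₁ α, Ck κ₁ α, 0; 0, 0, 1]
    let M₂ : Matrix (Fin 3) (Fin 3) ℝ :=
      !![Ck (κ₁ * κ₂) β, 0, -(κ₁ * κ₂) * Sk (κ₁ * κ₂) β; 0, 1, 0;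
        Sk (κ₁ * κ₂) β, 0, Ck (κ₁ * κ₂) β]
    let M₃ : Matrix (Fin 3) (Fin 3) ℝ :=
      !![1, 0, 0; 0, Ck κ₂ θ, -κ₂ * Sk κ₂ θ; 0, Sk κ₂ θ, Ck κ₂ θ]
    M₁ᵀ * G * M₁ = G ∧ M₂ᵀ * G * M₂ = G ∧ M₃ᵀ * G * M₃ = G := by
  intro G M₁ M₂ M₃
  refine ⟨?_, ?_, ?_⟩
  · simpa only [one_mul] using
      transpose_mul_diagonal_mul_rotation₀₁ (a := 1) (b := κ₁ * κ₂) (Ck_sq_add_mul_Sk_sq κ₁ α)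
  · simpa only [one_mul] using
      transpose_mul_diagonal_mul_rotation₀₂ (a := 1) (b := κ₁) (Ck_sq_add_mul_Sk_sq (κ₁ * κ₂) β)
  · exact transpose_mul_diagonal_mul_rotation₁₂ (a := κ₁) (b := 1) (Ck_sq_add_mul_Sk_sq κ₂ θ)
end

section
/- Let κ₁, κ₂ ∈ ℝ and let q ∈ ℍ_{κ₁,κ₂} be a unit quaternion (N(q) = 1). Then (j·q)·star(k·q) = −κ₁·i. (This computes the curvature of the principal connection on the Clifford fibration: the pairing of the horizontal frame vectors jq and kq equals −κ₁ i, so the curvature of the base spacetime is κ₁.) -/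
/-! Conjugation reverses products and `q * star q = N(q)` is a central scalar, so
`(p q) (star (r q)) = N(q) • p (star r)`; for a unit `q` only `j (star k) = -j k = -κ₁ i` remains. -/

open Quaternion

/-- The norm-squared on the generalized quaternions `ℍ_{κ₁,κ₂}`:
`N(x + yi + uj + vk) = x² + κ₂y² + κ₁u² + κ₁κ₂v²`. -/
def qN (κ₁ κ₂ : ℝ) (q : ℍ[ℝ, -κ₂, -κ₁]) : ℝ :=
  q.re ^ 2 + κ₂ * q.imI ^ 2 + κ₁ * q.imJ ^ 2 + κ₁ * κ₂ * q.imK ^ 2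

namespace QuaternionAlgebra

variable {κ₁ κ₂ : ℝ}

theorem mul_star_eq_qN (q : ℍ[ℝ, -κ₂, -κ₁]) : q * star q = (qN κ₁ κ₂ q : ℍ[ℝ, -κ₂, -κ₁]) := by
  rw [mul_star_eq_coe]
  congr 1
  simp only [qN, re_mul, re_star, imI_star, imJ_star, imK_star]
  ring

theorem mul_mul_star_mul_right (p r q : ℍ[ℝ, -κ₂, -κ₁]) :
    p * q * star (r * q) = qN κ₁ κ₂ q • (p * star r) := by
  rw [star_mul, mul_assoc, ← mul_assoc q, mul_star_eq_qN, coe_mul_eq_smul, mul_smul_comm]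

theorem j_mul_star_k :
    (⟨0, 0, 1, 0⟩ : ℍ[ℝ, -κ₂, -κ₁]) * star ⟨0, 0, 0, 1⟩ =
      -κ₁ • (⟨0, 1, 0, 0⟩ : ℍ[ℝ, -κ₂, -κ₁]) := by
  ext <;> simp

end QuaternionAlgebra

/-- For a unit quaternion `q`, the Hermitian pairing of the horizontal frame vectors
`jq` and `kq` is `(jq)(k̄q̄) = -κ₁ i`; the curvature of the base spacetime is `κ₁`. -/
theorem clifford_fibration_curvature (κ₁ κ₂ : ℝ) (q : ℍ[ℝ, -κ₂, -κ₁])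
    (hq : qN κ₁ κ₂ q = 1) :
    let i : ℍ[ℝ, -κ₂, -κ₁] := ⟨0, 1, 0, 0⟩
    let j : ℍ[ℝ, -κ₂, -κ₁] := ⟨0, 0, 1, 0⟩
    let k : ℍ[ℝ, -κ₂, -κ₁] := ⟨0, 0, 0, 1⟩
    (j * q) * star (k * q) = -κ₁ • i := by
  intro i j k
  rw [QuaternionAlgebra.mul_mul_star_mul_right, hq, one_smul, QuaternionAlgebra.j_mul_star_k]
end

section
/- Let κ₁, κ₂ ∈ ℝ and let z₁, z₂ ∈ ℂ_{κ₂} satisfy |z₁|² + κ₁|z₂|² = 1. Suppose w : ℝ → ℂ_{κ₂} is differentiable at 0 and satisfies, for all t in a neighborhood of 0, the relation w(t)·(C_{κ₁}(t)·z₁ − κ₁·S_{κ₁}(t)·z̄₂) = C_{κ₁}(t)·z₂ + S_{κ₁}(t)·z̄₁ (so that w(t) is the projection to the base of the horizontal curve X(t) = (C_{κ₁}(t) + S_{κ₁}(t)j)(z₁ + z₂j) on S³_{κ₁,κ₂}). Then z₁²·w′(0) = 1 in ℂ_{κ₂}; in particular the horizontal lift of the spacetime Σ_{κ₁,κ₂}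 has derivative w′(0) = 1/z₁², from which the induced metric dw·dw̄/(1 + κ₁|w|²)² of constant curvature κ₁ on the space of events follows. -/
/-! Differentiating the relation at `t = 0`, with `C_κ' = -κ S_κ`, `S_κ' = C_κ`, `C_κ(0) = 1` and
`S_κ(0) = 0`, gives `w(0) z₁ = z₂` and `w'(0) z₁ = z̄₁ + κ₁ w(0) z̄₂`. Multiplying the second
identity by `z₁` and using `z z̄ = |z|²` turns its right side into `|z₁|² + κ₁ |z₂|² = 1`. -/

/-- Multiplication in the generalized complex numbers `ℂ_κ ≅ ℝ²`:
`(x,y)·(x',y') = (xx' - κyy', xy' + x'y)`. -/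
def gcMul (κ : ℝ) (z w : ℝ × ℝ) : ℝ × ℝ :=
  (z.1 * w.1 - κ * z.2 * w.2, z.1 * w.2 + w.1 * z.2)

/-- Conjugation in `ℂ_κ`. -/
def gcConj (z : ℝ × ℝ) : ℝ × ℝ := (z.1, -z.2)

/-- The modulus-squared `|z|² = z z̄ = x² + κ y²` in `ℂ_κ`. -/
def gcNormSq (κ : ℝ) (z : ℝ × ℝ) : ℝ := z.1 ^ 2 + κ * z.2 ^ 2

theorem Ck_zero (κ : ℝ) : Ck κ 0 = 1 := by
  unfold Ck; split_ifs <;> simp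

theorem Sk_zero (κ : ℝ) : Sk κ 0 = 0 := by
  unfold Sk; split_ifs <;> simp

theorem hasDerivAt_Ck (κ t : ℝ) : HasDerivAt (Ck κ) (-κ * Sk κ t) t := by
  unfold Ck Sk
  split_ifs with hpos hzero
  · have hs : Real.sqrt κ ≠ 0 := (Real.sqrt_pos.mpr hpos).ne'
    refine (((hasDerivAt_id' t).const_mul (Real.sqrt κ)).cos).congr_deriv ?_
    field_simp
    rw [Real.sq_sqrt hpos.le]
    ring
  · simpa [hzero] using hasDerivAt_const t (1 : ℝ)
  · have hneg : 0 < -κ := neg_pos.mpr (lt_of_le_of_ne (not_lt.mp hpos) hzero)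
    have hs : Real.sqrt (-κ) ≠ 0 := (Real.sqrt_pos.mpr hneg).ne'
    refine (((hasDerivAt_id' t).const_mul (Real.sqrt (-κ))).cosh).congr_deriv ?_
    field_simp
    rw [Real.sq_sqrt hneg.le]
    ring

theorem hasDerivAt_Sk (κ t : ℝ) : HasDerivAt (Sk κ) (Ck κ t) t := by
  unfold Ck Sk
  split_ifs with hpos hzero
  · have hs : Real.sqrt κ ≠ 0 := (Real.sqrt_pos.mpr hpos).ne'
    refine ((((hasDerivAt_id' t).const_mul (Real.sqrt κ)).sin).div_const _).congr_deriv ?_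
    field_simp
  · exact hasDerivAt_id' t
  · have hneg : 0 < -κ := neg_pos.mpr (lt_of_le_of_ne (not_lt.mp hpos) hzero)
    have hs : Real.sqrt (-κ) ≠ 0 := (Real.sqrt_pos.mpr hneg).ne'
    refine ((((hasDerivAt_id' t).const_mul (Real.sqrt (-κ))).sinh).div_const _).congr_deriv ?_
    field_simp

section GeneralizedComplex

variable (κ : ℝ)

theorem gcMul_comm (z w : ℝ × ℝ) : gcMul κ z w = gcMul κ w z := by
  simp only [gcMul, Prod.mk.injEq]; constructor <;> ring

theorem gcMul_assoc (a b c : ℝ × ℝ) :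
    gcMul κ (gcMul κ a b) c = gcMul κ a (gcMul κ b c) := by
  simp only [gcMul, Prod.mk.injEq]; constructor <;> ring

theorem gcMul_add (z w v : ℝ × ℝ) : gcMul κ z (w + v) = gcMul κ z w + gcMul κ z v := by
  simp only [gcMul, Prod.fst_add, Prod.snd_add, Prod.mk_add_mk, Prod.mk.injEq]
  constructor <;> ring

theorem gcMul_smul (c : ℝ) (z w : ℝ × ℝ) : gcMul κ z (c • w) = c • gcMul κ z w := by
  simp only [gcMul, Prod.smul_fst, Prod.smul_snd, Prod.smul_mk, smul_eq_mul, Prod.mk.injEq]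
  constructor <;> ring

theorem gcMul_gcConj_self (z : ℝ × ℝ) : gcMul κ z (gcConj z) = (gcNormSq κ z, 0) := by
  simp only [gcMul, gcConj, gcNormSq, Prod.mk.injEq]; constructor <;> ring

theorem HasDerivAt.gcMul {f g : ℝ → ℝ × ℝ} {f' g' : ℝ × ℝ} {t : ℝ}
    (hf : HasDerivAt f f' t) (hg : HasDerivAt g g' t) :
    HasDerivAt (fun s => gcMul κ (f s) (g s)) (gcMul κ f' (g t) + gcMul κ (f t) g') t := by
  have hf₁ : HasDerivAt (fun s => (f s).1) f'.1 t := hf.fst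
  have hf₂ : HasDerivAt (fun s => (f s).2) f'.2 t := hf.snd
  have hg₁ : HasDerivAt (fun s => (g s).1) g'.1 t := hg.fst
  have hg₂ : HasDerivAt (fun s => (g s).2) g'.2 t := hg.snd
  have h := ((hf₁.mul hg₁).sub ((hf₂.mul hg₂).const_mul κ)).prodMk
    ((hf₁.mul hg₂).add (hg₁.mul hf₂))
  convert h using 1
  · ext s
    · simp only [_root_.gcMul, Pi.mul_apply, Pi.sub_apply]
      ring
    · rfl
  · simp only [_root_.gcMul, Prod.mk_add_mk, Prod.mk.injEq]
    constructor <;> ring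

end GeneralizedComplex

/-- If `|z₁|² + κ₁|z₂|² = 1` and `w : ℝ → ℂ_{κ₂}` is differentiable at `0` with
`w(t)·(C_{κ₁}(t) z₁ - κ₁ S_{κ₁}(t) z̄₂) = C_{κ₁}(t) z₂ + S_{κ₁}(t) z̄₁` near `0`
(the projection to the base of the horizontal curve
`X(t) = (C_{κ₁}(t) + S_{κ₁}(t) j)(z₁ + z₂ j)` on `S³_{κ₁,κ₂}`), then `z₁² w'(0) = 1`
in `ℂ_{κ₂}`; from `w'(0) = 1/z₁²` the induced metric `dw dw̄/(1 + κ₁|w|²)²` of constant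
curvature `κ₁` on the space of events follows. -/
theorem horizontal_lift_derivative (κ₁ κ₂ : ℝ) (z₁ z₂ : ℝ × ℝ)
    (hz : gcNormSq κ₂ z₁ + κ₁ * gcNormSq κ₂ z₂ = 1)
    (w : ℝ → ℝ × ℝ) (w' : ℝ × ℝ) (hw : HasDerivAt w w' 0)
    (hrel : ∀ᶠ t in nhds (0 : ℝ),
      gcMul κ₂ (w t) (Ck κ₁ t • z₁ - (κ₁ * Sk κ₁ t) • gcConj z₂) =
        Ck κ₁ t • z₂ + Sk κ₁ t • gcConj z₁) :
    gcMul κ₂ (gcMul κ₂ z₁ z₁) w' = (1, 0) := by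
  have hX : HasDerivAt (fun t => Ck κ₁ t • z₁ - (κ₁ * Sk κ₁ t) • gcConj z₂)
      ((-κ₁ * Sk κ₁ 0) • z₁ - (κ₁ * Ck κ₁ 0) • gcConj z₂) 0 :=
    ((hasDerivAt_Ck κ₁ 0).smul_const z₁).sub
      (((hasDerivAt_Sk κ₁ 0).const_mul κ₁).smul_const (gcConj z₂))
  have hY : HasDerivAt (fun t => Ck κ₁ t • z₂ + Sk κ₁ t • gcConj z₁)
      ((-κ₁ * Sk κ₁ 0) • z₂ + Ck κ₁ 0 • gcConj z₁) 0 :=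
    ((hasDerivAt_Ck κ₁ 0).smul_const z₂).add ((hasDerivAt_Sk κ₁ 0).smul_const (gcConj z₁))
  have hval : gcMul κ₂ (w 0) z₁ = z₂ := by
    simpa [Ck_zero, Sk_zero] using hrel.self_of_nhds
  have hderiv : gcMul κ₂ w' z₁ = gcConj z₁ + κ₁ • gcMul κ₂ (w 0) (gcConj z₂) := by
    have h := hY.unique ((hw.gcMul κ₂ hX).congr_of_eventuallyEq (hrel.mono fun _ ht => ht.symm))
    simp only [Ck_zero, Sk_zero, mul_zero, mul_one, zero_smul, one_smul, zero_add, sub_zero,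
      zero_sub, ← neg_smul, gcMul_smul] at h
    rw [h, neg_smul]
    abel
  calc gcMul κ₂ (gcMul κ₂ z₁ z₁) w'
      = gcMul κ₂ z₁ (gcMul κ₂ w' z₁) := by rw [gcMul_assoc, gcMul_comm κ₂ z₁ w']
    _ = gcMul κ₂ z₁ (gcConj z₁) + κ₁ • gcMul κ₂ (gcMul κ₂ z₁ (w 0)) (gcConj z₂) := by
        rw [hderiv, gcMul_add, gcMul_smul, gcMul_assoc]
    _ = (1, 0) := by
        rw [gcMul_comm κ₂ z₁ (w 0), hval, gcMul_gcConj_self, gcMul_gcConj_self, ← hz]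
        simp
end
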